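/- arXiv:1511.05738 — 3 statements merged into one kernel-verified Lean document; each statement's English description precedes it below -/
import Mathlib

section
/- Let P and Q be probability distributions on binary sequences of length n+1 arising from a two-state Markov chain with transition matrix T (states {0,1}, outputs equal to the next state), started from state 0 and state 1 respectively. Then the classical fidelity (Bhattacharyya coefficient) F(P,Q) = Σ_x √(P(x)Q(x)) equals √(T₀₀T₁₀) + √(T₀₁T₁₁), independent of n ≥ 0. -/
/-- Markov path distribution on binary strings of length `n+1`, started in state `s`:
`P(x₁,…,x_{n+1}) = T_{s x₁} · T_{x₁ x₂} ⋯ T_{xₙ x_{n+1}}`. -/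
def markovPathProb (T : Fin 2 → Fin 2 → ℝ) (s : Fin 2) {n : ℕ}
    (x : Fin (n + 1) → Fin 2) : ℝ :=
  T s (x 0) * ∏ k : Fin n, T (x k.castSucc) (x k.succ)

lemma markovPathProb_nonneg (T : Fin 2 → Fin 2 → ℝ) (hpos : ∀ i j, 0 ≤ T i j)
    (s : Fin 2) {n : ℕ} (x : Fin (n + 1) → Fin 2) : 0 ≤ markovPathProb T s x := by
  exact mul_nonneg (hpos _ _) (Finset.prod_nonneg fun k _ => hpos _ _)

lemma markovPathProb_cons (T : Fin 2 → Fin 2 → ℝ) (s b : Fin 2) {n : ℕ}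
    (y : Fin (n + 1) → Fin 2) :
    markovPathProb T s (Fin.cons b y) = T s b * markovPathProb T b y := by
  unfold markovPathProb
  rw [Fin.prod_univ_succ]
  simp only [Fin.cons_zero, Fin.castSucc_zero, ← Fin.succ_castSucc, Fin.cons_succ]

lemma markovPathProb_sum (T : Fin 2 → Fin 2 → ℝ) (hrow : ∀ i, T i 0 + T i 1 = 1)
    (s : Fin 2) : ∀ n : ℕ, ∑ x : Fin (n + 1) → Fin 2, markovPathProb T s x = 1 := by
  intro n
  induction n generalizing s with
  | zero =>
    rw [← (Equiv.funUnique (Fin 1) (Fin 2)).symm.sum_comp]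
    simp [markovPathProb, Fin.sum_univ_two, hrow]
  | succ m ih =>
    rw [← (Fin.consEquiv (fun _ : Fin (m+2) => Fin 2)).sum_comp, Fintype.sum_prod_type]
    simp only [Fin.consEquiv, Equiv.coe_fn_mk, markovPathProb_cons]
    rw [Fin.sum_univ_two]
    rw [← Finset.mul_sum, ← Finset.mul_sum, ih, ih]
    simp [hrow]

/-- The Bhattacharyya coefficient between the length-`(n+1)` output distributions of a
two-state Markov chain started from state `0` and state `1` equals
`√(T₀₀T₁₀) + √(T₀₁T₁₁)`, independently of `n ≥ 0`. -/
theorem bhattacharyya_markov_paths (n : ℕ) (T : Fin 2 → Fin 2 → ℝ)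
    (hpos : ∀ i j, 0 ≤ T i j) (hrow : ∀ i, T i 0 + T i 1 = 1) :
    ∑ x : Fin (n + 1) → Fin 2,
        Real.sqrt (markovPathProb T 0 x * markovPathProb T 1 x)
      = Real.sqrt (T 0 0 * T 1 0) + Real.sqrt (T 0 1 * T 1 1) := by
  cases n with
  | zero =>
    rw [← (Equiv.funUnique (Fin 1) (Fin 2)).symm.sum_comp]
    simp [markovPathProb, Fin.sum_univ_two]
  | succ m =>
    rw [← (Fin.consEquiv (fun _ : Fin (m+2) => Fin 2)).sum_comp, Fintype.sum_prod_type]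
    simp only [Fin.consEquiv, Equiv.coe_fn_mk, markovPathProb_cons]
    have key : ∀ b : Fin 2, ∑ y : Fin (m + 1) → Fin 2,
        Real.sqrt (T 0 b * markovPathProb T b y * (T 1 b * markovPathProb T b y))
        = Real.sqrt (T 0 b * T 1 b) := by
      intro b
      have : ∀ y : Fin (m + 1) → Fin 2,
          Real.sqrt (T 0 b * markovPathProb T b y * (T 1 b * markovPathProb T b y))
          = Real.sqrt (T 0 b * T 1 b) * markovPathProb T b y := by
        intro y
        have h1 : T 0 b * markovPathProb T b y * (T 1 b * markovPathProb T b y)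
            = (T 0 b * T 1 b) * (markovPathProb T b y)^2 := by ring
        rw [h1, Real.sqrt_mul (mul_nonneg (hpos _ _) (hpos _ _)),
          Real.sqrt_sq (markovPathProb_nonneg T hpos b y)]
      rw [Finset.sum_congr rfl fun y _ => this y, ← Finset.mul_sum,
        markovPathProb_sum T hrow b, mul_one]
    rw [Fin.sum_univ_two, key 0, key 1]
end

section
/- The fidelity between quantum states is monotone non-decreasing under completely positive trace-preserving maps: for any quantum channel ℛ and density matrices σ₀, σ₁, F(ℛ(σ₀), ℛ(σ₁)) ≥ F(σ₀, σ₁). -/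
open scoped Matrix ComplexOrder

/-- Square root of a Hermitian matrix via the spectral theorem (junk value `0` otherwise). -/
noncomputable def msqrt {n : ℕ} (A : Matrix (Fin n) (Fin n) ℂ) : Matrix (Fin n) (Fin n) ℂ :=
  if h : A.IsHermitian then
    (h.eigenvectorUnitary : Matrix (Fin n) (Fin n) ℂ) *
      Matrix.diagonal (fun i => (Real.sqrt (h.eigenvalues i) : ℂ)) *
      (h.eigenvectorUnitary : Matrix (Fin n) (Fin n) ℂ)ᴴ
  else 0

/-- Quantum fidelity `F(ρ,σ) = Tr √(√ρ σ √ρ)`. -/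
noncomputable def fidelity {n : ℕ} (ρ σ : Matrix (Fin n) (Fin n) ℂ) : ℝ :=
  (msqrt (msqrt ρ * σ * msqrt ρ)).trace.re

/-- Von Neumann entropy `S(ρ) = -Tr(ρ log ρ)` via eigenvalues (junk value `0` if not Hermitian);
note `Real.log 0 = 0` so `0 log 0 = 0`. -/
noncomputable def vnEntropy {n : ℕ} (ρ : Matrix (Fin n) (Fin n) ℂ) : ℝ :=
  if h : ρ.IsHermitian then -∑ i, (h.eigenvalues i) * Real.log (h.eigenvalues i) else 0

/-- Outer product `|ψ⟩⟨ψ|`. -/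
noncomputable def proj {n : ℕ} (ψ : Fin n → ℂ) : Matrix (Fin n) (Fin n) ℂ :=
  Matrix.of fun i j => ψ i * star (ψ j)

/-- Inner product `⟨ψ|φ⟩`. -/
noncomputable def qInner {n : ℕ} (ψ φ : Fin n → ℂ) : ℂ := ∑ i, star (ψ i) * φ i

/-!
Fidelity has the variational form `F(A, B) = max {Re Tr Y | [[A, Y], [Yᴴ, B]] ≥ 0}`.
A channel with Kraus operators `Kᵢ` acts on such a block matrix through the Kraus operators
`Kᵢ ⊕ Kᵢ`, so it keeps the block matrix positive and, being trace preserving, keeps `Tr Y`;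
hence the maximum can only grow.
For the upper bound, write the block matrix as a Gram matrix `Gᴴ G`; polar decompositions of
the two halves of `G` turn `Tr Y` into `Tr (Q T)` with `Q` unitary and `T = |√B √A| ≥ 0`, and
`Re Tr (Q T) ≤ Tr T`.
-/

open Matrix

theorem LinearMap.exists_linearIsometry_comp_eq {𝕜 W V : Type*} [RCLike 𝕜] [AddCommGroup W]
    [Module 𝕜 W] [NormedAddCommGroup V] [InnerProductSpace 𝕜 V] [FiniteDimensional 𝕜 V]
    (A B : W →ₗ[𝕜] V) (h : ∀ x, ‖A x‖ = ‖B x‖) :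
    ∃ L : V →ₗᵢ[𝕜] V, L.toLinearMap ∘ₗ A = B := by
  have hker : LinearMap.ker A ≤ LinearMap.ker B := fun x hx => by
    rw [LinearMap.mem_ker] at hx ⊢
    rw [← norm_eq_zero, ← h, hx, norm_zero]
  let L₀ : LinearMap.range A →ₗ[𝕜] V :=
    (LinearMap.ker A).liftQ B hker ∘ₗ A.quotKerEquivRange.symm.toLinearMap
  have hL₀ (x : W) : L₀ ⟨A x, LinearMap.mem_range_self A x⟩ = B x := by
    simp [L₀, LinearMap.quotKerEquivRange_symm_apply_image]
  let L : LinearMap.range A →ₗᵢ[𝕜] V :=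
    { L₀ with norm_map' := by rintro ⟨_, x, rfl⟩; exact (congrArg norm (hL₀ x)).trans (h x).symm }
  exact ⟨L.extend, LinearMap.ext fun x => (L.extend_apply ⟨A x, _⟩).trans (hL₀ x)⟩

namespace Matrix

theorem trace_fromBlocks {α ι κ : Type*} [AddCommMonoid α] [Fintype ι] [Fintype κ]
    (A : Matrix ι ι α) (B : Matrix ι κ α) (C : Matrix κ ι α) (D : Matrix κ κ α) :
    (fromBlocks A B C D).trace = A.trace + D.trace := by
  simp [trace, Fintype.sum_sum_type]

variable {𝕜 ι : Type*} [RCLike 𝕜] [Fintype ι] [DecidableEq ι]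

theorem exists_mem_unitaryGroup_mul_eq {A B : Matrix ι ι 𝕜} (h : Aᴴ * A = Bᴴ * B) :
    ∃ U ∈ unitaryGroup ι 𝕜, U * A = B := by
  let Φ := toEuclideanCLM (n := ι) (𝕜 := 𝕜)
  have hnorm (x : EuclideanSpace 𝕜 ι) : ‖Φ A x‖ = ‖Φ B x‖ := by
    have hΦ : (Φ A).adjoint ∘L Φ A = (Φ B).adjoint ∘L Φ B := by
      simp only [← ContinuousLinearMap.star_eq_adjoint, ← ContinuousLinearMap.mul_def, ← map_star,
        ← map_mul, star_eq_conjTranspose, h]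
    rw [← sq_eq_sq₀ (norm_nonneg _) (norm_nonneg _),
      ContinuousLinearMap.apply_norm_sq_eq_inner_adjoint_left,
      ContinuousLinearMap.apply_norm_sq_eq_inner_adjoint_left, hΦ]
  obtain ⟨L, hL⟩ := LinearMap.exists_linearIsometry_comp_eq (Φ A).toLinearMap (Φ B) hnorm
  obtain ⟨U, hU⟩ := EquivLike.surjective Φ L.toContinuousLinearMap
  refine ⟨U, ?_, EquivLike.injective Φ ?_⟩
  · rw [mem_unitaryGroup_iff']
    apply EquivLike.injective Φ
    rw [map_mul, map_star, hU, map_one, ContinuousLinearMap.star_eq_adjoint]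
    exact L.adjoint_comp_self
  · rw [map_mul, hU]
    exact ContinuousLinearMap.coe_injective hL

theorem re_trace_mul_le_of_mem_unitaryGroup {Q P : Matrix ι ι 𝕜} (hQ : Q ∈ unitaryGroup ι 𝕜)
    (hP : P.PosSemidef) : RCLike.re (Q * P).trace ≤ RCLike.re P.trace := by
  set V : Matrix ι ι 𝕜 := (hP.1.eigenvectorUnitary : Matrix ι ι 𝕜)
  set d := hP.1.eigenvalues
  have hV : V ∈ unitaryGroup ι 𝕜 := hP.1.eigenvectorUnitary.2
  have hQ' : star V * Q * V ∈ unitaryGroup ι 𝕜 :=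
    mul_mem (mul_mem (Unitary.star_mem hV) hQ) hV
  have hspec : P = V * diagonal (RCLike.ofReal ∘ d) * star V := hP.1.spectral_theorem
  have htrace : (Q * P).trace = ∑ i, (star V * Q * V) i i * d i := by
    rw [hspec, ← mul_assoc, ← mul_assoc, trace_mul_comm, ← mul_assoc, ← mul_assoc]
    simp [trace, mul_diagonal]
  rw [htrace, hP.1.trace_eq_sum_eigenvalues, map_sum, map_sum]
  refine Finset.sum_le_sum fun i _ => ?_
  calc RCLike.re ((star V * Q * V) i i * d i) = RCLike.re ((star V * Q * V) i i) * d i := by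
        simp
    _ ≤ 1 * d i := by
        gcongr
        · exact hP.eigenvalues_nonneg i
        · exact (RCLike.re_le_norm _).trans (entry_norm_bound_of_unitary hQ' i i)
    _ = RCLike.re (d i : 𝕜) := by simp

theorem re_trace_conjTranspose_mul_le {X₁ X₂ P₁ P₂ T : Matrix ι ι 𝕜}
    (h₁ : P₁ᴴ * P₁ = X₁ᴴ * X₁) (h₂ : P₂ᴴ * P₂ = X₂ᴴ * X₂) (hT : T.PosSemidef)
    (hT' : Tᴴ * T = (P₂ * P₁ᴴ)ᴴ * (P₂ * P₁ᴴ)) :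
    RCLike.re (X₁ᴴ * X₂).trace ≤ RCLike.re T.trace := by
  obtain ⟨U₁, hU₁, rfl⟩ := exists_mem_unitaryGroup_mul_eq h₁
  obtain ⟨U₂, hU₂, rfl⟩ := exists_mem_unitaryGroup_mul_eq h₂
  obtain ⟨U₃, hU₃, hU₃T⟩ := exists_mem_unitaryGroup_mul_eq hT'
  have hQ : star U₁ * U₂ * U₃ ∈ unitaryGroup ι 𝕜 :=
    mul_mem (mul_mem (Unitary.star_mem hU₁) hU₂) hU₃
  have htrace : ((U₁ * P₁)ᴴ * (U₂ * P₂)).trace = (star U₁ * U₂ * U₃ * T).trace :=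
    calc ((U₁ * P₁)ᴴ * (U₂ * P₂)).trace = (P₁ᴴ * (star U₁ * U₂ * P₂)).trace := by
          simp only [conjTranspose_mul, star_eq_conjTranspose, mul_assoc]
      _ = (star U₁ * U₂ * (P₂ * P₁ᴴ)).trace := by rw [trace_mul_comm, mul_assoc, mul_assoc]
      _ = (star U₁ * U₂ * U₃ * T).trace := by rw [← hU₃T, mul_assoc (star U₁ * U₂)]
  exact htrace ▸ re_trace_mul_le_of_mem_unitaryGroup hQ hT

open scoped MatrixOrder in
theorem re_trace_le_of_fromBlocks_posSemidef {A B Y P₁ P₂ T : Matrix ι ι 𝕜}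
    (hP : (fromBlocks A Y Yᴴ B).PosSemidef) (hA : A = P₁ᴴ * P₁) (hB : B = P₂ᴴ * P₂)
    (hT : T.PosSemidef) (hT' : Tᴴ * T = (P₂ * P₁ᴴ)ᴴ * (P₂ * P₁ᴴ)) :
    RCLike.re Y.trace ≤ RCLike.re T.trace := by
  obtain ⟨G, hG⟩ := CStarAlgebra.nonneg_iff_eq_star_mul_self.mp hP.nonneg
  have hgram (E E' : Matrix (ι ⊕ ι) (ι ⊕ ι) 𝕜) :
      (G * E)ᴴ * (G * E') = Eᴴ * fromBlocks A Y Yᴴ B * E' := by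
    rw [hG, star_eq_conjTranspose, conjTranspose_mul, mul_assoc, mul_assoc, mul_assoc]
  have hT₀ : (fromBlocks T 0 0 0 : Matrix (ι ⊕ ι) (ι ⊕ ι) 𝕜).PosSemidef := by
    obtain ⟨S, hS⟩ := CStarAlgebra.nonneg_iff_eq_star_mul_self.mp hT.nonneg
    simpa [hS, star_eq_conjTranspose, fromBlocks_conjTranspose, fromBlocks_multiply] using
      posSemidef_conjTranspose_mul_self (fromBlocks S 0 0 0 : Matrix (ι ⊕ ι) (ι ⊕ ι) 𝕜)
  -- Padding with zero blocks makes the two column halves of `G` square.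
  have key := re_trace_conjTranspose_mul_le (X₁ := G * fromBlocks 1 0 0 0)
    (X₂ := G * fromBlocks 0 0 1 0) (P₁ := fromBlocks P₁ 0 0 0) (P₂ := fromBlocks P₂ 0 0 0)
    ?_ ?_ hT₀ ?_
  · simp only [hgram, fromBlocks_conjTranspose, fromBlocks_multiply, trace_fromBlocks] at key
    simpa using key
  all_goals
    simp only [hgram, fromBlocks_conjTranspose, fromBlocks_multiply]
    simp [hA, hB, hT']

end Matrix

section Kraus

variable {κ m n R : Type*} [Fintype κ] [Fintype n] [CommSemiring R] [StarRing R]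

def krausMap (K : κ → Matrix m n R) (X : Matrix n n R) : Matrix m m R :=
  ∑ i, K i * X * (K i)ᴴ

theorem trace_krausMap [Fintype m] [DecidableEq n] {K : κ → Matrix m n R}
    (hK : ∑ i, (K i)ᴴ * K i = 1) (X : Matrix n n R) : (krausMap K X).trace = X.trace := by
  rw [krausMap, trace_sum]
  simp_rw [trace_mul_cycle (K _)]
  rw [← trace_sum, ← Finset.sum_mul, hK, one_mul]

theorem conjTranspose_krausMap (K : κ → Matrix m n R) (X : Matrix n n R) :
    (krausMap K X)ᴴ = krausMap K Xᴴ := by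
  simp only [krausMap, conjTranspose_sum, conjTranspose_mul, conjTranspose_conjTranspose,
    Matrix.mul_assoc]

theorem fromBlocks_krausMap (K : κ → Matrix m n R) (A B C D : Matrix n n R) :
    fromBlocks (krausMap K A) (krausMap K B) (krausMap K C) (krausMap K D) =
      krausMap (fun i => fromBlocks (K i) 0 0 (K i)) (fromBlocks A B C D) := by
  ext (i | i) (j | j) <;>
    simp [krausMap, Matrix.sum_apply, fromBlocks_multiply, fromBlocks_conjTranspose]

theorem Matrix.PosSemidef.krausMap {𝕜 : Type*} [RCLike 𝕜] [Fintype m] {X : Matrix n n 𝕜}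
    (hX : X.PosSemidef) (K : κ → Matrix m n 𝕜) : (krausMap K X).PosSemidef :=
  posSemidef_sum _ fun i _ => hX.mul_mul_conjTranspose_same (K i)

end Kraus

section Fidelity

variable {n : ℕ} {A B : Matrix (Fin n) (Fin n) ℂ}

open scoped MatrixOrder in
theorem msqrt_eq_cfcSqrt (hA : A.PosSemidef) : msqrt A = CFC.sqrt A := by
  rw [msqrt, dif_pos hA.1, CFC.sqrt_eq_cfc, cfc_nnreal_eq_real _ A hA.nonneg, hA.1.cfc_eq,
    IsHermitian.cfc, Unitary.conjStarAlgAut_apply, star_eq_conjTranspose]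
  congr 3
  funext i
  exact congrArg Complex.ofReal (Real.sqrt.eq_1 _)

open scoped MatrixOrder in
theorem posSemidef_msqrt (hA : A.PosSemidef) : (msqrt A).PosSemidef := by
  rw [msqrt_eq_cfcSqrt hA]
  exact (CFC.sqrt_nonneg A).posSemidef

theorem conjTranspose_msqrt (hA : A.PosSemidef) : (msqrt A)ᴴ = msqrt A :=
  (posSemidef_msqrt hA).1.eq

open scoped MatrixOrder in
theorem msqrt_mul_msqrt (hA : A.PosSemidef) : msqrt A * msqrt A = A := by
  rw [msqrt_eq_cfcSqrt hA]
  exact CFC.sqrt_mul_sqrt_self A hA.nonneg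

theorem conjTranspose_msqrt_mul_self (hA : A.PosSemidef) : (msqrt A)ᴴ * msqrt A = A := by
  rw [conjTranspose_msqrt hA, msqrt_mul_msqrt hA]

theorem msqrt_mul_msqrt_conjTranspose_mul_self (hA : A.PosSemidef) (hB : B.PosSemidef) :
    (msqrt B * msqrt A)ᴴ * (msqrt B * msqrt A) = msqrt A * B * msqrt A := by
  rw [conjTranspose_mul, conjTranspose_msqrt hA, conjTranspose_msqrt hB, mul_assoc,
    ← mul_assoc (msqrt B), msqrt_mul_msqrt hB, mul_assoc]

theorem posSemidef_msqrt_mul_mul_msqrt (hA : A.PosSemidef) (hB : B.PosSemidef) :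
    (msqrt A * B * msqrt A).PosSemidef :=
  msqrt_mul_msqrt_conjTranspose_mul_self hA hB ▸ posSemidef_conjTranspose_mul_self _

theorem re_trace_le_fidelity {Y : Matrix (Fin n) (Fin n) ℂ}
    (hP : (fromBlocks A Y Yᴴ B).PosSemidef) : Y.trace.re ≤ fidelity A B := by
  have hA : A.PosSemidef := hP.submatrix Sum.inl
  have hB : B.PosSemidef := hP.submatrix Sum.inr
  have hM := posSemidef_msqrt_mul_mul_msqrt hA hB
  refine re_trace_le_of_fromBlocks_posSemidef hP (conjTranspose_msqrt_mul_self hA).symm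
    (conjTranspose_msqrt_mul_self hB).symm (posSemidef_msqrt hM) ?_
  rw [conjTranspose_msqrt_mul_self hM, conjTranspose_msqrt hA,
    msqrt_mul_msqrt_conjTranspose_mul_self hA hB]

theorem exists_fromBlocks_posSemidef_re_trace_eq_fidelity (hA : A.PosSemidef)
    (hB : B.PosSemidef) :
    ∃ X, (fromBlocks A X Xᴴ B).PosSemidef ∧ X.trace.re = fidelity A B := by
  have hM := posSemidef_msqrt_mul_mul_msqrt hA hB
  obtain ⟨W, hW, hWT⟩ := exists_mem_unitaryGroup_mul_eq (A := msqrt (msqrt A * B * msqrt A))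
    (B := msqrt B * msqrt A) <| by
      rw [conjTranspose_msqrt_mul_self hM, msqrt_mul_msqrt_conjTranspose_mul_self hA hB]
  have hWW : W * Wᴴ = 1 := mem_unitaryGroup_iff.mp hW
  refine ⟨msqrt A * Wᴴ * msqrt B, ?_, ?_⟩
  · set L := fromBlocks (msqrt A) (Wᴴ * msqrt B) 0 0
    have hL : fromBlocks A (msqrt A * Wᴴ * msqrt B) (msqrt A * Wᴴ * msqrt B)ᴴ B = Lᴴ * L := by
      simp only [L, fromBlocks_conjTranspose, fromBlocks_multiply, conjTranspose_mul,
        conjTranspose_conjTranspose, conjTranspose_msqrt hA, conjTranspose_msqrt hB,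
        conjTranspose_zero, mul_zero, add_zero, mul_assoc, msqrt_mul_msqrt hA, fromBlocks_inj,
        true_and]
      rw [← mul_assoc W, hWW, one_mul, msqrt_mul_msqrt hB]
    exact hL ▸ posSemidef_conjTranspose_mul_self L
  · calc (msqrt A * Wᴴ * msqrt B).trace.re = (Wᴴ * (msqrt B * msqrt A)).trace.re := by
          rw [mul_assoc, trace_mul_comm, mul_assoc]
      _ = fidelity A B := by
          rw [← hWT, ← mul_assoc, ← star_eq_conjTranspose, mem_unitaryGroup_iff'.mp hW, one_mul,
            fidelity]

end Fidelity

theorem fidelity_monotone_cptp_general {n m : ℕ} (K : Fin m → Matrix (Fin n) (Fin n) ℂ)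
    (hK : ∑ i, (K i)ᴴ * K i = 1)
    (σ₀ σ₁ : Matrix (Fin n) (Fin n) ℂ)
    (h₀ : σ₀.PosSemidef) (h₁ : σ₁.PosSemidef) :
    fidelity σ₀ σ₁ ≤ fidelity (∑ i, K i * σ₀ * (K i)ᴴ) (∑ i, K i * σ₁ * (K i)ᴴ) := by
  obtain ⟨X, hX, hXF⟩ := exists_fromBlocks_posSemidef_re_trace_eq_fidelity h₀ h₁
  have hΦX : (fromBlocks (krausMap K σ₀) (krausMap K X) (krausMap K X)ᴴ
      (krausMap K σ₁)).PosSemidef := by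
    rw [conjTranspose_krausMap, fromBlocks_krausMap]
    exact hX.krausMap _
  calc fidelity σ₀ σ₁ = (krausMap K X).trace.re := by rw [trace_krausMap hK, hXF]
    _ ≤ fidelity (krausMap K σ₀) (krausMap K σ₁) := re_trace_le_fidelity hΦX

/-- Fidelity is monotone non-decreasing under CPTP maps (given here in Kraus form:
`ℛ(ρ) = ∑ᵢ Kᵢ ρ Kᵢᴴ` with `∑ᵢ Kᵢᴴ Kᵢ = 1`, which characterizes completely positive
trace-preserving maps): `F(ℛ(σ₀), ℛ(σ₁)) ≥ F(σ₀, σ₁)`. -/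
theorem fidelity_monotone_cptp {n m : ℕ} (K : Fin m → Matrix (Fin n) (Fin n) ℂ)
    (hK : ∑ i, (K i)ᴴ * K i = 1)
    (σ₀ σ₁ : Matrix (Fin n) (Fin n) ℂ)
    (h₀ : σ₀.PosSemidef) (h₁ : σ₁.PosSemidef)
    (ht₀ : σ₀.trace = 1) (ht₁ : σ₁.trace = 1) :
    fidelity σ₀ σ₁ ≤ fidelity (∑ i, K i * σ₀ * (K i)ᴴ) (∑ i, K i * σ₁ * (K i)ᴴ) :=
  fidelity_monotone_cptp_general K hK σ₀ σ₁ h₀ h₁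
end

section
/- Optimality of the pure-state quantum model among two-state pure models: among all pairs of pure qubit states (|ψ₀⟩, |ψ₁⟩) with fixed mixing probabilities (p₀, p₁) and overlap constrained by |⟨ψ₀|ψ₁⟩| ≤ F_max, the von Neumann entropy S(p₀|ψ₀⟩⟨ψ₀| + p₁|ψ₁⟩⟨ψ₁|) is minimized exactly when |⟨ψ₀|ψ₁⟩| = F_max. -/
/-!
A qubit density matrix has eigenvalues `λ, 1 - λ` with `λ (1 - λ) = det ρ`, so its entropy is the
binary entropy of the smaller root `(1 - √(1 - 4 det ρ)) / 2`, a strictly increasing function of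
`det ρ ∈ [0, 1/4]`. For `ρ = p₀|ψ₀⟩⟨ψ₀| + p₁|ψ₁⟩⟨ψ₁|` the Gram determinant gives
`det ρ = p₀ p₁ (1 - |⟨ψ₀|ψ₁⟩|²)`, which is smallest exactly when the overlap is largest.
-/

open scoped Matrix ComplexOrder

open Real Set Matrix

noncomputable def entropyOfDet (d : ℝ) : ℝ :=
  binEntropy ((1 - √(1 - 4 * d)) / 2)

lemma negMulLog_add_negMulLog_eq_entropyOfDet {a b : ℝ} (hab : a + b = 1) :
    negMulLog a + negMulLog b = entropyOfDet (a * b) := by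
  have hsqrt : √(1 - 4 * (a * b)) = |a - b| := by
    rw [← Real.sqrt_sq_eq_abs]
    congr 1
    linear_combination (-(a + b) - 1) * hab
  rw [entropyOfDet, hsqrt, binEntropy_eq_negMulLog_add_negMulLog_one_sub]
  rcases le_total b a with hba | hab'
  · rw [abs_of_nonneg (sub_nonneg.2 hba), show (1 - (a - b)) / 2 = b by linarith, show 1 - b = a by linarith, add_comm]
  · rw [abs_of_nonpos (sub_nonpos.2 hab'), show (1 - -(a - b)) / 2 = a by linarith, show 1 - a = b by linarith]

lemma entropyOfDet_strictMonoOn : StrictMonoOn entropyOfDet (Icc 0 (1 / 4)) := by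
  have hroot : StrictMonoOn (fun d : ℝ => (1 - √(1 - 4 * d)) / 2) (Icc 0 (1 / 4)) := by
    intro d₁ _ d₂ hd₂ h
    have := Real.sqrt_lt_sqrt (by linarith [hd₂.2]) (by linarith : 1 - 4 * d₂ < 1 - 4 * d₁)
    dsimp only
    linarith
  have hmaps : MapsTo (fun d : ℝ => (1 - √(1 - 4 * d)) / 2) (Icc 0 (1 / 4)) (Icc 0 2⁻¹) := by
    intro d hd
    have hle : √(1 - 4 * d) ≤ 1 := Real.sqrt_le_one.2 (by linarith [hd.1])
    constructor <;> linarith [Real.sqrt_nonneg (1 - 4 * d)]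
  exact binEntropy_strictMonoOn.comp hroot hmaps

namespace Matrix.IsHermitian

variable {ρ : Matrix (Fin 2) (Fin 2) ℂ} (hρ : ρ.IsHermitian)
include hρ

lemma eigenvalues_add_eq_one (htr : ρ.trace = 1) : hρ.eigenvalues 0 + hρ.eigenvalues 1 = 1 := by
  have := hρ.trace_eq_sum_eigenvalues
  rw [htr, Fin.sum_univ_two] at this
  simpa using congrArg Complex.re this.symm

lemma det_re_eq_eigenvalues_mul : ρ.det.re = hρ.eigenvalues 0 * hρ.eigenvalues 1 := by
  rw [hρ.det_eq_prod_eigenvalues, Fin.prod_univ_two]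
  norm_cast

lemma vnEntropy_eq_entropyOfDet (htr : ρ.trace = 1) : vnEntropy ρ = entropyOfDet ρ.det.re := by
  rw [vnEntropy, dif_pos hρ, Fin.sum_univ_two, hρ.det_re_eq_eigenvalues_mul,
    ← negMulLog_add_negMulLog_eq_entropyOfDet (hρ.eigenvalues_add_eq_one htr)]
  simp only [negMulLog]
  ring

end Matrix.IsHermitian

namespace Matrix.PosSemidef

variable {ρ σ : Matrix (Fin 2) (Fin 2) ℂ}

lemma det_re_mem_Icc (hρ : ρ.PosSemidef) (htr : ρ.trace = 1) : ρ.det.re ∈ Icc 0 (1 / 4) := by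
  have h₀ := hρ.eigenvalues_nonneg 0
  have h₁ := hρ.eigenvalues_nonneg 1
  have hsum := hρ.isHermitian.eigenvalues_add_eq_one htr
  rw [hρ.isHermitian.det_re_eq_eigenvalues_mul]
  constructor
  · positivity
  · nlinarith [sq_nonneg (hρ.isHermitian.eigenvalues 0 - hρ.isHermitian.eigenvalues 1)]

lemma vnEntropy_le_vnEntropy_iff (hρ : ρ.PosSemidef) (hσ : σ.PosSemidef)
    (htrρ : ρ.trace = 1) (htrσ : σ.trace = 1) :
    vnEntropy ρ ≤ vnEntropy σ ↔ ρ.det.re ≤ σ.det.re := by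
  rw [hρ.isHermitian.vnEntropy_eq_entropyOfDet htrρ, hσ.isHermitian.vnEntropy_eq_entropyOfDet htrσ]
  exact entropyOfDet_strictMonoOn.le_iff_le (hρ.det_re_mem_Icc htrρ) (hσ.det_re_mem_Icc htrσ)

lemma vnEntropy_eq_vnEntropy_iff (hρ : ρ.PosSemidef) (hσ : σ.PosSemidef)
    (htrρ : ρ.trace = 1) (htrσ : σ.trace = 1) :
    vnEntropy ρ = vnEntropy σ ↔ ρ.det.re = σ.det.re := by
  rw [hρ.isHermitian.vnEntropy_eq_entropyOfDet htrρ, hσ.isHermitian.vnEntropy_eq_entropyOfDet htrσ]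
  exact entropyOfDet_strictMonoOn.injOn.eq_iff (hρ.det_re_mem_Icc htrρ) (hσ.det_re_mem_Icc htrσ)

end Matrix.PosSemidef

lemma star_qInner {n : ℕ} (ψ φ : Fin n → ℂ) : star (qInner ψ φ) = qInner φ ψ := by
  simp only [qInner, star_sum, star_mul', star_star, mul_comm]

lemma proj_eq_vecMulVec {n : ℕ} (ψ : Fin n → ℂ) : proj ψ = vecMulVec ψ (star ψ) := rfl

lemma trace_proj {n : ℕ} (ψ : Fin n → ℂ) : (proj ψ).trace = qInner ψ ψ := by
  simp only [proj_eq_vecMulVec, trace_vecMulVec, dotProduct, qInner, Pi.star_apply, mul_comm]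

section Mixture

variable {n : ℕ} {p₀ p₁ : ℝ} {ψ₀ ψ₁ : Fin n → ℂ}

lemma posSemidef_mixture (hp₀ : 0 ≤ p₀) (hp₁ : 0 ≤ p₁) :
    ((p₀ : ℂ) • proj ψ₀ + (p₁ : ℂ) • proj ψ₁).PosSemidef := by
  rw [proj_eq_vecMulVec, proj_eq_vecMulVec]
  exact ((posSemidef_vecMulVec_self_star ψ₀).smul (by exact_mod_cast hp₀)).add
    ((posSemidef_vecMulVec_self_star ψ₁).smul (by exact_mod_cast hp₁))

lemma trace_mixture (hsum : p₀ + p₁ = 1) (hψ₀ : qInner ψ₀ ψ₀ = 1) (hψ₁ : qInner ψ₁ ψ₁ = 1) :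
    ((p₀ : ℂ) • proj ψ₀ + (p₁ : ℂ) • proj ψ₁).trace = 1 := by
  rw [trace_add, trace_smul, trace_smul, trace_proj, trace_proj, hψ₀, hψ₁, smul_eq_mul,
    smul_eq_mul, mul_one, mul_one]
  exact_mod_cast hsum

end Mixture

lemma det_smul_proj_add_smul_proj (p₀ p₁ : ℂ) (ψ₀ ψ₁ : Fin 2 → ℂ) :
    (p₀ • proj ψ₀ + p₁ • proj ψ₁).det
      = p₀ * p₁ * (qInner ψ₀ ψ₀ * qInner ψ₁ ψ₁ - qInner ψ₀ ψ₁ * qInner ψ₁ ψ₀) := by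
  simp only [det_fin_two, Matrix.add_apply, Matrix.smul_apply, proj, of_apply, qInner,
    Fin.sum_univ_two, smul_eq_mul]
  ring

lemma det_re_mixture (p₀ p₁ : ℝ) {ψ₀ ψ₁ : Fin 2 → ℂ}
    (hψ₀ : qInner ψ₀ ψ₀ = 1) (hψ₁ : qInner ψ₁ ψ₁ = 1) :
    ((p₀ : ℂ) • proj ψ₀ + (p₁ : ℂ) • proj ψ₁).det.re = p₀ * p₁ * (1 - ‖qInner ψ₀ ψ₁‖ ^ 2) := by
  rw [det_smul_proj_add_smul_proj, hψ₀, hψ₁, ← star_qInner ψ₀ ψ₁, Complex.star_def,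
    Complex.mul_conj, Complex.normSq_eq_norm_sq, one_mul]
  norm_cast

theorem pure_model_optimal_at_max_fidelity_general (p₀ p₁ : ℝ) (hp₀ : 0 < p₀) (hp₁ : 0 < p₁)
    (hsum : p₀ + p₁ = 1) (Fmax : ℝ)
    (ψ₀ ψ₁ φ₀ φ₁ : Fin 2 → ℂ)
    (huψ₀ : qInner ψ₀ ψ₀ = 1) (huψ₁ : qInner ψ₁ ψ₁ = 1)
    (huφ₀ : qInner φ₀ φ₀ = 1) (huφ₁ : qInner φ₁ φ₁ = 1)
    (hψ : ‖qInner ψ₀ ψ₁‖ ≤ Fmax)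
    (hφ : ‖qInner φ₀ φ₁‖ = Fmax) :
    vnEntropy ((p₀ : ℂ) • proj φ₀ + (p₁ : ℂ) • proj φ₁)
        ≤ vnEntropy ((p₀ : ℂ) • proj ψ₀ + (p₁ : ℂ) • proj ψ₁) ∧
      (vnEntropy ((p₀ : ℂ) • proj ψ₀ + (p₁ : ℂ) • proj ψ₁)
          = vnEntropy ((p₀ : ℂ) • proj φ₀ + (p₁ : ℂ) • proj φ₁) ↔
        ‖qInner ψ₀ ψ₁‖ = Fmax) := by
  have hψρ := posSemidef_mixture (ψ₀ := ψ₀) (ψ₁ := ψ₁) hp₀.le hp₁.le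
  have hφρ := posSemidef_mixture (ψ₀ := φ₀) (ψ₁ := φ₁) hp₀.le hp₁.le
  have htrψ := trace_mixture hsum huψ₀ huψ₁
  have htrφ := trace_mixture hsum huφ₀ huφ₁
  rw [hφρ.vnEntropy_le_vnEntropy_iff hψρ htrφ htrψ, hψρ.vnEntropy_eq_vnEntropy_iff hφρ htrψ htrφ,
    det_re_mixture p₀ p₁ huψ₀ huψ₁, det_re_mixture p₀ p₁ huφ₀ huφ₁, hφ]
  constructor
  · gcongr
  · rw [mul_right_inj' (mul_pos hp₀ hp₁).ne', sub_right_inj,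
      sq_eq_sq₀ (norm_nonneg _) (hφ ▸ norm_nonneg _)]

/-- Optimality among two-state pure models: with fixed mixing probabilities `p₀, p₁ > 0`,
`p₀ + p₁ = 1`, and `F_max ∈ [0,1)`, among all pairs of pure qubit states whose overlap is
constrained by `|⟨ψ₀|ψ₁⟩| ≤ F_max`, the entropy `S(p₀|ψ₀⟩⟨ψ₀| + p₁|ψ₁⟩⟨ψ₁|)` is minimized
exactly by the pairs with `|⟨ψ₀|ψ₁⟩| = F_max`. -/
theorem pure_model_optimal_at_max_fidelity (p₀ p₁ : ℝ) (hp₀ : 0 < p₀) (hp₁ : 0 < p₁)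
    (hsum : p₀ + p₁ = 1) (Fmax : ℝ) (hFmax : Fmax ∈ Set.Ico (0:ℝ) 1)
    (ψ₀ ψ₁ φ₀ φ₁ : Fin 2 → ℂ)
    (huψ₀ : qInner ψ₀ ψ₀ = 1) (huψ₁ : qInner ψ₁ ψ₁ = 1)
    (huφ₀ : qInner φ₀ φ₀ = 1) (huφ₁ : qInner φ₁ φ₁ = 1)
    (hψ : ‖qInner ψ₀ ψ₁‖ ≤ Fmax)
    (hφ : ‖qInner φ₀ φ₁‖ = Fmax) :
    vnEntropy ((p₀ : ℂ) • proj φ₀ + (p₁ : ℂ) • proj φ₁)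
        ≤ vnEntropy ((p₀ : ℂ) • proj ψ₀ + (p₁ : ℂ) • proj ψ₁) ∧
      (vnEntropy ((p₀ : ℂ) • proj ψ₀ + (p₁ : ℂ) • proj ψ₁)
          = vnEntropy ((p₀ : ℂ) • proj φ₀ + (p₁ : ℂ) • proj φ₁) ↔
        ‖qInner ψ₀ ψ₁‖ = Fmax) :=
  pure_model_optimal_at_max_fidelity_general p₀ p₁ hp₀ hp₁ hsum Fmax ψ₀ ψ₁ φ₀ φ₁ huψ₀ huψ₁ huφ₀ huφ₁
    hψ hφ
end
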